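/- arXiv:2402.09246 — 3 statements merged into one kernel-verified Lean document; each statement's English description precedes it below -/
import Mathlib

section
/- Let N ≥ 1, let J : Equiv.Perm (Fin N) → ℝ assign to each order of play the social cost of its local Stackelberg equilibrium, and let B assign to each duplicate-free list l of elements of Fin N (an incomplete permutation) a lower-bound value. Assume admissibility: for every duplicate-free list l and every permutation p extending l, B l ≤ J p. Let J* denote the minimum of J over all permutations of Fin N. Then the set S of permutations p such that, for every k ≤ N, the length-k prefix list (p 0, p 1, …, p (k-1)) has B-value at most J*, is nonempty, contains every minimizer of J, and the minimum of J over S equals J*. (Branch and Play returns the socially optimal Stackelberg equilibrium under admissibility.) -/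
/-- A permutation `p` of `Fin N` extends the (incomplete) permutation given by the
list `l` if `p m = l.get m` for every index `m < l.length`. -/
def ExtendsList {N : ℕ} (p : Equiv.Perm (Fin N)) (l : List (Fin N)) : Prop :=
  ∀ (m : ℕ) (hm : m < l.length) (hN : m < N), p ⟨m, hN⟩ = l.get ⟨m, hm⟩

lemma prefix_nodup {N : ℕ} (p : Equiv.Perm (Fin N)) (k : ℕ) :
    (((List.finRange N).map p).take k).Nodup :=
  ((List.nodup_finRange N).map p.injective).sublist (List.take_sublist _ _)

lemma prefix_extends {N : ℕ} (p : Equiv.Perm (Fin N)) (k : ℕ) :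
    ExtendsList p (((List.finRange N).map p).take k) := by
  intro m hm hNm
  simp [List.get_eq_getElem, List.getElem_take, List.getElem_map]

/-- Branch and Play returns the socially optimal Stackelberg equilibrium under
admissibility. -/
theorem branch_and_play_optimal (N : ℕ) (hN : 1 ≤ N)
    (J : Equiv.Perm (Fin N) → ℝ) (B : List (Fin N) → ℝ)
    (admissible : ∀ l : List (Fin N), l.Nodup →
      ∀ p : Equiv.Perm (Fin N), ExtendsList p l → B l ≤ J p) :
    let Jstar : ℝ := Finset.univ.inf' Finset.univ_nonempty J
    let S : Set (Equiv.Perm (Fin N)) :=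
      {p | ∀ k ≤ N, B (((List.finRange N).map p).take k) ≤ Jstar}
    S.Nonempty ∧
      (∀ p : Equiv.Perm (Fin N), (∀ q, J p ≤ J q) → p ∈ S) ∧
      IsLeast (J '' S) Jstar := by
  intro Jstar S
  have hmin : ∀ p, (∀ q, J p ≤ J q) → p ∈ S := by
    intro p hp k _
    have hle : J p ≤ Jstar := by
      obtain ⟨q, -, hq⟩ := Finset.exists_mem_eq_inf' (Finset.univ_nonempty) J
      rw [show Jstar = J q from hq]; exact hp q
    exact le_trans (admissible _ (prefix_nodup p k) p (prefix_extends p k)) hle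
  obtain ⟨p₀, -, hp₀⟩ := Finset.exists_mem_eq_inf' (Finset.univ_nonempty (α := Equiv.Perm (Fin N))) J
  have hp₀min : ∀ q, J p₀ ≤ J q := fun q => hp₀ ▸ Finset.inf'_le _ (Finset.mem_univ q)
  refine ⟨⟨p₀, hmin p₀ hp₀min⟩, hmin, ⟨⟨p₀, hmin p₀ hp₀min, hp₀.symm⟩, ?_⟩⟩
  rintro x ⟨q, -, rfl⟩
  exact Finset.inf'_le _ (Finset.mem_univ q)
end

section
/- Let N ≥ 2, let J : Equiv.Perm (Fin N) → ℝ, let l be a duplicate-free list of elements of Fin N with k := l.length satisfying k + 1 < N, and let i, j be two distinct elements of Fin N not appearing in l. Let σ denote the transposition of the positions k and k+1 in Fin N. Suppose that for every permutation p of Fin N extending the list l ++ [j, i], one has J (p ∘ σ) = J p (note that p ∘ σ extends l ++ [i, j]). Then the minimum of J over all permutations extending l ++ [j, i] equals the minimum of J over all permutations extending l ++ [i, j]; consequently, the minimum of J over all permutations extending l equals the minimum of J over all permutations extending l that do not extend l ++ [j, i]. (Pairwise-collision pruning does not exclude any node containing the optimal solution.) -/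
/-!
Right multiplication by the transposition `σ` of the positions `k = l.length` and `k + 1` is an
involution exchanging the permutations extending `l ++ [j, i]` with those extending
`l ++ [i, j]`, and by hypothesis it preserves `J` on the former. Hence both sets have the same
image under `J`. Since `i ≠ j`, the permutations extending `l ++ [i, j]` extend `l` but not
`l ++ [j, i]`, so removing the node `l ++ [j, i]` from the node `l` does not change the image of
`J` either.
-/

theorem Set.image_eq_image_of_involutive {α β : Type*} {f : α → α} {S T : Set α} {J : α → β}
    (hf : Function.Involutive f) (hST : Set.MapsTo f S T) (hTS : Set.MapsTo f T S)
    (hJ : ∀ x ∈ S, J (f x) = J x) : J '' S = J '' T := by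
  apply Set.Subset.antisymm
  · rintro _ ⟨x, hx, rfl⟩
    exact ⟨f x, hST hx, hJ x hx⟩
  · rintro _ ⟨y, hy, rfl⟩
    refine ⟨f y, hTS hy, ?_⟩
    simpa only [hf y] using (hJ (f y) (hTS hy)).symm

theorem Set.image_diff_eq_of_image_inter_subset {α β : Type*} {U S : Set α} {J : α → β}
    (h : J '' (U ∩ S) ⊆ J '' (U \ S)) : J '' (U \ S) = J '' U := by
  rw [← Set.sdiff_union_inter U S, Set.image_union, Set.union_eq_left.2 h, Set.sdiff_union_inter]

theorem extendsList_append_pair {N : ℕ} {l : List (Fin N)} (hk : l.length + 1 < N)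
    (p : Equiv.Perm (Fin N)) (x y : Fin N) :
    ExtendsList p (l ++ [x, y]) ↔
      ExtendsList p l ∧ p ⟨l.length, Nat.lt_of_succ_lt hk⟩ = x ∧ p ⟨l.length + 1, hk⟩ = y := by
  constructor
  · intro h
    refine ⟨fun m hm hN => ?_, ?_, ?_⟩
    · simpa [List.getElem_append_left hm] using h m (by simp; omega) hN
    · simpa using h l.length (by simp) (Nat.lt_of_succ_lt hk)
    · simpa using h (l.length + 1) (by simp) hk
  · rintro ⟨h, hx, hy⟩ m hm hN
    rcases lt_trichotomy m l.length with hlt | rfl | hgt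
    · simpa [List.getElem_append_left hlt] using h m hlt hN
    · simpa using hx
    · obtain rfl : m = l.length + 1 := by simp at hm; omega
      simpa using hy

theorem extendsList_mul_swap {N : ℕ} {l : List (Fin N)} (hk : l.length + 1 < N)
    {p : Equiv.Perm (Fin N)} {x y : Fin N} (hp : ExtendsList p (l ++ [x, y])) :
    ExtendsList (p * Equiv.swap ⟨l.length, Nat.lt_of_succ_lt hk⟩ ⟨l.length + 1, hk⟩)
      (l ++ [y, x]) := by
  rw [extendsList_append_pair hk] at hp ⊢
  obtain ⟨hl, hx, hy⟩ := hp
  refine ⟨fun m hm hN => ?_, by simpa using hy, by simpa using hx⟩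
  rw [Equiv.Perm.mul_apply, Equiv.swap_apply_of_ne_of_ne (by simp [Fin.ext_iff]; omega)
    (by simp [Fin.ext_iff]; omega)]
  exact hl m hm hN

theorem ExtendsList.not_append_pair_swap {N : ℕ} {l : List (Fin N)} (hk : l.length + 1 < N)
    {p : Equiv.Perm (Fin N)} {x y : Fin N} (hxy : x ≠ y) (hp : ExtendsList p (l ++ [x, y])) :
    ¬ ExtendsList p (l ++ [y, x]) := fun hp' =>
  hxy (((extendsList_append_pair hk p x y).1 hp).2.1.symm.trans
    ((extendsList_append_pair hk p y x).1 hp').2.1)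

theorem pairwise_collision_pruning_general (N : ℕ)
    (J : Equiv.Perm (Fin N) → ℝ)
    (l : List (Fin N)) (hk : l.length + 1 < N)
    (i j : Fin N) (hij : i ≠ j)
    (hswap : ∀ p : Equiv.Perm (Fin N), ExtendsList p (l ++ [j, i]) →
      J (p * Equiv.swap (⟨l.length, Nat.lt_of_succ_lt hk⟩ : Fin N)
          (⟨l.length + 1, hk⟩ : Fin N)) = J p) :
    sInf (J '' {p : Equiv.Perm (Fin N) | ExtendsList p (l ++ [j, i])}) =
      sInf (J '' {p : Equiv.Perm (Fin N) | ExtendsList p (l ++ [i, j])}) ∧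
    sInf (J '' {p : Equiv.Perm (Fin N) | ExtendsList p l}) =
      sInf (J '' {p : Equiv.Perm (Fin N) |
        ExtendsList p l ∧ ¬ ExtendsList p (l ++ [j, i])}) := by
  set σ := Equiv.swap (⟨l.length, Nat.lt_of_succ_lt hk⟩ : Fin N) ⟨l.length + 1, hk⟩
  have himage : J '' {p | ExtendsList p (l ++ [j, i])} = J '' {p | ExtendsList p (l ++ [i, j])} :=
    Set.image_eq_image_of_involutive (f := (· * σ))
      (fun p => by simp only [σ, mul_assoc, Equiv.swap_mul_self, mul_one])
      (fun _ => extendsList_mul_swap hk) (fun _ => extendsList_mul_swap hk) hswap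
  refine ⟨congrArg sInf himage, congrArg sInf (Set.image_diff_eq_of_image_inter_subset ?_).symm⟩
  calc J '' ({p | ExtendsList p l} ∩ {p | ExtendsList p (l ++ [j, i])})
      ⊆ J '' {p | ExtendsList p (l ++ [j, i])} := Set.image_mono Set.inter_subset_right
    _ = J '' {p | ExtendsList p (l ++ [i, j])} := himage
    _ ⊆ J '' ({p | ExtendsList p l} \ {p | ExtendsList p (l ++ [j, i])}) :=
        Set.image_mono fun p hp =>
          ⟨((extendsList_append_pair hk p i j).1 hp).1, hp.not_append_pair_swap hk hij⟩

/-- Pairwise-collision pruning does not exclude any node containing the optimal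
solution. -/
theorem pairwise_collision_pruning (N : ℕ) (hN : 2 ≤ N)
    (J : Equiv.Perm (Fin N) → ℝ)
    (l : List (Fin N)) (hl : l.Nodup) (hk : l.length + 1 < N)
    (i j : Fin N) (hij : i ≠ j) (hi : i ∉ l) (hj : j ∉ l)
    (hswap : ∀ p : Equiv.Perm (Fin N), ExtendsList p (l ++ [j, i]) →
      J (p * Equiv.swap (⟨l.length, Nat.lt_of_succ_lt hk⟩ : Fin N)
          (⟨l.length + 1, hk⟩ : Fin N)) = J p) :
    sInf (J '' {p : Equiv.Perm (Fin N) | ExtendsList p (l ++ [j, i])}) =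
      sInf (J '' {p : Equiv.Perm (Fin N) | ExtendsList p (l ++ [i, j])}) ∧
    sInf (J '' {p : Equiv.Perm (Fin N) | ExtendsList p l}) =
      sInf (J '' {p : Equiv.Perm (Fin N) |
        ExtendsList p l ∧ ¬ ExtendsList p (l ++ [j, i])}) :=
  pairwise_collision_pruning_general N J l hk i j hij hswap
end

section
/- Let N ≥ 1 and let l be a duplicate-free list of elements of Fin N with l.length < N. Then the set of permutations of Fin N extending l is the union, over all elements i of Fin N not appearing in l, of the sets of permutations extending l ++ [i], and these sets are pairwise disjoint for distinct i. Consequently, for any J : Equiv.Perm (Fin N) → ℝ, the minimum of J over permutations extending l equals the minimum, over i not in l, of the minimum of J over permutations extending l ++ [i]. (Correctness of the branching step of Branch and Play.) -/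
theorem csInf_biUnion_eq_csInf_image {α ι : Type*} [ConditionallyCompleteLattice α]
    {S : Set ι} (hS : S.Finite) {A : ι → Set α}
    (hA : ∀ i ∈ S, (A i).Nonempty ∧ BddBelow (A i)) :
    sInf (⋃ i ∈ S, A i) = sInf ((fun i => sInf (A i)) '' S) := by
  rcases S.eq_empty_or_nonempty with rfl | hSne
  · simp
  have ⟨i₀, hi₀⟩ := hSne
  have : Nonempty α := ⟨(hA i₀ hi₀).1.some⟩
  have hUne : (⋃ i ∈ S, A i).Nonempty :=
    (hA i₀ hi₀).1.mono (Set.subset_biUnion_of_mem hi₀)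
  have hUbdd : BddBelow (⋃ i ∈ S, A i) := hS.bddBelow_biUnion.mpr fun i hi => (hA i hi).2
  apply le_antisymm
  · refine le_csInf (hSne.image _) ?_
    rintro _ ⟨i, hi, rfl⟩
    exact csInf_le_csInf hUbdd (hA i hi).1 (Set.subset_biUnion_of_mem hi)
  · refine le_csInf hUne fun x hx => ?_
    obtain ⟨i, hi, hxi⟩ := Set.mem_iUnion₂.mp hx
    calc sInf ((fun i => sInf (A i)) '' S) ≤ sInf (A i) :=
          csInf_le (hS.image _).bddBelow (Set.mem_image_of_mem _ hi)
      _ ≤ x := csInf_le (hA i hi).2 hxi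

section ExtendsList

variable {N : ℕ} {p : Equiv.Perm (Fin N)} {l : List (Fin N)}

theorem exists_extendsList (hl : l.Nodup) (hlen : l.length ≤ N) :
    ∃ p : Equiv.Perm (Fin N), ExtendsList p l := by
  obtain ⟨p, hp⟩ := Equiv.Perm.exists_extending_pair (Fin.castLE hlen) l.get
    (Fin.castLE_injective hlen) (List.nodup_iff_injective_get.mp hl)
  exact ⟨p, fun m hm _ => hp ⟨m, hm⟩⟩

theorem ExtendsList.apply_length_notMem (hp : ExtendsList p l) (hlen : l.length < N) :
    p ⟨l.length, hlen⟩ ∉ l := by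
  intro hmem
  obtain ⟨⟨m, hm⟩, hget⟩ := List.mem_iff_get.mp hmem
  have := p.injective ((hp m hm (hm.trans hlen)).trans hget)
  simp only [Fin.mk.injEq] at this
  omega

theorem extendsList_append_singleton_iff {i : Fin N} (hlen : l.length < N) :
    ExtendsList p (l ++ [i]) ↔ ExtendsList p l ∧ p ⟨l.length, hlen⟩ = i := by
  simp only [ExtendsList, List.length_append, List.length_singleton, List.get_eq_getElem]
  constructor
  · intro hp
    refine ⟨fun m hm hN => ?_, ?_⟩
    · simpa [List.getElem_append_left hm] using hp m (by omega) hN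
    · simpa using hp l.length (by omega) hlen
  · rintro ⟨hp, hi⟩ m hm hN
    obtain hm | rfl := Nat.lt_succ_iff_lt_or_eq.mp hm
    · simpa [List.getElem_append_left hm] using hp m hm hN
    · simpa using hi

theorem setOf_extendsList_eq_biUnion (hlen : l.length < N) :
    {p : Equiv.Perm (Fin N) | ExtendsList p l} =
      ⋃ i ∈ {i : Fin N | i ∉ l}, {p : Equiv.Perm (Fin N) | ExtendsList p (l ++ [i])} := by
  ext p
  simp only [Set.mem_ofPred_eq, Set.mem_iUnion, exists_prop, extendsList_append_singleton_iff hlen]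
  constructor
  · exact fun hp => ⟨_, hp.apply_length_notMem hlen, hp, rfl⟩
  · exact fun ⟨_, _, hp, _⟩ => hp

theorem disjoint_setOf_extendsList_append {i j : Fin N} (hlen : l.length < N) (hij : i ≠ j) :
    Disjoint {p : Equiv.Perm (Fin N) | ExtendsList p (l ++ [i])}
      {p : Equiv.Perm (Fin N) | ExtendsList p (l ++ [j])} := by
  refine Set.disjoint_left.mpr fun p hpi hpj => hij ?_
  rw [← ((extendsList_append_singleton_iff hlen).mp hpi).2,
    ← ((extendsList_append_singleton_iff hlen).mp hpj).2]

end ExtendsList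

theorem branching_correct_general (N : ℕ)
    (l : List (Fin N)) (hl : l.Nodup) (hlen : l.length < N)
    (J : Equiv.Perm (Fin N) → ℝ) :
    ({p : Equiv.Perm (Fin N) | ExtendsList p l} =
      ⋃ i ∈ {i : Fin N | i ∉ l}, {p : Equiv.Perm (Fin N) | ExtendsList p (l ++ [i])}) ∧
    (∀ i : Fin N, i ∉ l → ∀ j : Fin N, j ∉ l → i ≠ j →
      Disjoint {p : Equiv.Perm (Fin N) | ExtendsList p (l ++ [i])}
        {p : Equiv.Perm (Fin N) | ExtendsList p (l ++ [j])}) ∧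
    sInf (J '' {p : Equiv.Perm (Fin N) | ExtendsList p l}) =
      sInf ((fun i : Fin N =>
        sInf (J '' {p : Equiv.Perm (Fin N) | ExtendsList p (l ++ [i])})) ''
        {i : Fin N | i ∉ l}) := by
  have hunion := setOf_extendsList_eq_biUnion hlen
  refine ⟨hunion, fun i _ j _ hij => disjoint_setOf_extendsList_append hlen hij, ?_⟩
  rw [hunion, Set.image_iUnion₂]
  refine csInf_biUnion_eq_csInf_image (Set.toFinite _) fun i hi =>
    ⟨?_, (Set.toFinite _).bddBelow⟩
  have hchild : (l ++ [i]).Nodup :=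
    List.concat_eq_append ▸ (List.nodup_concat l i).mpr ⟨hi, hl⟩
  obtain ⟨p, hp⟩ := exists_extendsList hchild (by simpa using hlen)
  exact ⟨J p, p, hp, rfl⟩

/-- Correctness of the branching step of Branch and Play. -/
theorem branching_correct (N : ℕ) (hN : 1 ≤ N)
    (l : List (Fin N)) (hl : l.Nodup) (hlen : l.length < N)
    (J : Equiv.Perm (Fin N) → ℝ) :
    ({p : Equiv.Perm (Fin N) | ExtendsList p l} =
      ⋃ i ∈ {i : Fin N | i ∉ l}, {p : Equiv.Perm (Fin N) | ExtendsList p (l ++ [i])}) ∧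
    (∀ i : Fin N, i ∉ l → ∀ j : Fin N, j ∉ l → i ≠ j →
      Disjoint {p : Equiv.Perm (Fin N) | ExtendsList p (l ++ [i])}
        {p : Equiv.Perm (Fin N) | ExtendsList p (l ++ [j])}) ∧
    sInf (J '' {p : Equiv.Perm (Fin N) | ExtendsList p l}) =
      sInf ((fun i : Fin N =>
        sInf (J '' {p : Equiv.Perm (Fin N) | ExtendsList p (l ++ [i])})) ''
        {i : Fin N | i ∉ l}) :=
  branching_correct_general N l hl hlen J
end
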